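/- arXiv:1811.05241 — 3 statements merged into one kernel-verified Lean document; each statement's English description precedes it below -/
import Mathlib

section
/- Let A be an n×n real symmetric matrix, Q an n×n real orthogonal matrix, and V the positive-definite square root of I + A². Let y₁,…,yₙ be independent real-valued random variables on a probability space, each square-integrable with common variance σ. Define the random variables N_j = Σ_{p=1}^{n} (V*Q)_{j p} · y_p. Then for every j, the variance of N_j equals (1 + Σ_{i=1}^{n} (A i j)²) · σ. -/
open Matrix Finset MeasureTheory ProbabilityTheory

/-- Theorem 1 of the paper: the variance of the `j`-th nullifier
`N_j = ∑ p, (V*Q) j p • y p` built from independent, identically squeezed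
oscillators `y p` (common variance `σ`) equals `(1 + ∑ i, (A i j)²) * σ`. -/
theorem variance_nullifier {n : ℕ} {Ω : Type*} [MeasureSpace Ω]
    [IsProbabilityMeasure (ℙ : Measure Ω)]
    (A Q V : Matrix (Fin n) (Fin n) ℝ)
    (hA : A.IsSymm)
    (hQ : Q * Qᵀ = 1) (hQ' : Qᵀ * Q = 1)
    (hV : V.PosDef) (hV2 : V * V = 1 + A * A)
    (y : Fin n → Ω → ℝ) (σ : ℝ) (hσ : 0 ≤ σ)
    (hmeas : ∀ i, Measurable (y i))
    (hL2 : ∀ i, MemLp (y i) 2 ℙ)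
    (hindep : iIndepFun y ℙ)
    (hvar : ∀ i, variance (y i) ℙ = σ) :
    ∀ j, variance (fun ω => ∑ p, (V * Q) j p * y p ω) ℙ
      = (1 + ∑ i, (A i j) ^ 2) * σ := by
  intro j
  set c : Fin n → ℝ := fun p => (V * Q) j p with hc
  have hfun : (fun ω => ∑ p, c p * y p ω) = ∑ p, (fun ω => c p * y p ω) := by
    funext ω; simp
  have hvs : variance (fun ω => ∑ p, c p * y p ω) ℙ
      = ∑ p, variance (fun ω => c p * y p ω) ℙ := by
    rw [hfun]
    apply IndepFun.variance_sum
    · intro i _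
      exact ((hL2 i).const_mul (c i))
    · intro i _ k _ hik
      exact (hindep.indepFun hik).comp (measurable_const_mul (c i))
        (measurable_const_mul (c k))
  have hvp : ∀ p, variance (fun ω => c p * y p ω) ℙ = c p ^ 2 * σ := by
    intro p
    have := variance_const_mul (c p) (y p) ℙ
    simpa [hvar p] using this
  rw [hvs]
  simp only [hvp]
  rw [← Finset.sum_mul]
  congr 1
  -- ∑ p, ((V*Q) j p)^2 = (V * Q * (V*Q)ᵀ) j j = (V*V) j j = 1 + ∑ i, (A i j)^2
  have key : ∑ p, c p ^ 2 = (V * Q * (V * Q)ᵀ) j j := by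
    simp only [Matrix.mul_apply, Matrix.transpose_apply, hc, sq]
  rw [key]
  have hVsymm : Vᵀ = V := hV.isHermitian.eq
  have : V * Q * (V * Q)ᵀ = V * V := by
    rw [Matrix.transpose_mul, hVsymm]
    rw [← Matrix.mul_assoc, Matrix.mul_assoc V Q Qᵀ, hQ, Matrix.mul_one]
  rw [this, hV2]
  have hAj : ∀ i, A j i = A i j := fun i => (hA.apply j i).symm
  simp [Matrix.add_apply, Matrix.one_apply, Matrix.mul_apply, sq, hAj]
end

section
/- Let A be an n×n real symmetric matrix all of whose entries are 0 or 1 (the adjacency matrix of an unweighted graph), let Q be an n×n real orthogonal matrix, and let V be the positive-definite square root of I + A². Then for every index j, Σ_{p=1}^{n} ((V*Q)_{j p})² = 1 + deg(j), where deg(j) = #{i : A i j = 1} is the number of neighbors of node j. -/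
/-! Since `Q` is orthogonal and `V` is symmetric, `(V Q)(V Q)ᵀ = V² = 1 + A²`, so the squared
norm of row `j` of `V Q` is the diagonal entry `1 + ∑ i, A i j ^ 2`; for a `0/1` matrix
`A i j ^ 2 = A i j`, and that sum counts the neighbours of `j`. -/

open Matrix Finset

namespace Matrix

variable {m n R : Type*} [Fintype n] [CommSemiring R]

lemma mul_transpose_self_apply_self (M : Matrix m n R) (j : m) :
    (M * Mᵀ) j j = ∑ p, M j p ^ 2 := by
  simp only [mul_apply, transpose_apply, sq]

lemma mul_mul_transpose_of_mul_transpose_eq_one [DecidableEq n] (V : Matrix m n R)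
    {Q : Matrix n n R} (hQ : Q * Qᵀ = 1) : (V * Q) * (V * Q)ᵀ = V * Vᵀ := by
  rw [transpose_mul, Matrix.mul_assoc, ← Matrix.mul_assoc Q, hQ, Matrix.one_mul]

lemma IsSymm.mul_self_apply_self {A : Matrix n n R} (hA : A.IsSymm) (j : n) :
    (A * A) j j = ∑ i, A i j ^ 2 := by
  simp only [mul_apply, hA.apply, sq]

end Matrix

lemma Finset.sum_sq_eq_card_filter_eq_one {ι R : Type*} [Semiring R] [DecidableEq R]
    {s : Finset ι} {f : ι → R} (hf : ∀ i ∈ s, f i = 0 ∨ f i = 1) :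
    ∑ i ∈ s, f i ^ 2 = #{i ∈ s | f i = 1} := by
  rw [← sum_boole]
  refine sum_congr rfl fun i hi => ?_
  rcases hf i hi with h | h <;> simp [h]

theorem row_sq_sum_unweighted_general {n : ℕ}
    (A Q V : Matrix (Fin n) (Fin n) ℝ)
    (hA : A.IsSymm)
    (h01 : ∀ i j, A i j = 0 ∨ A i j = 1)
    (hQ : Q * Qᵀ = 1)
    (hV : V.PosDef) (hV2 : V * V = 1 + A * A) :
    ∀ j, ∑ p, ((V * Q) j p) ^ 2
      = 1 + ((Finset.univ.filter fun i => A i j = 1).card : ℝ) := by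
  intro j
  have hV_symm : Vᵀ = V := (isHermitian_iff_isSymm.mp hV.isHermitian).eq
  rw [← mul_transpose_self_apply_self, mul_mul_transpose_of_mul_transpose_eq_one V hQ, hV_symm,
    hV2, Matrix.add_apply, one_apply_eq, hA.mul_self_apply_self,
    sum_sq_eq_card_filter_eq_one fun i _ => h01 i j]

/-- Corollary 1 of the paper: for an unweighted graph
(adjacency matrix with entries in {0,1}), the sum of squares of the entries of
the `j`-th row of `V * Q` equals `1 + deg j`, where `deg j` is the number of
neighbors of node `j`. -/
theorem row_sq_sum_unweighted {n : ℕ}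
    (A Q V : Matrix (Fin n) (Fin n) ℝ)
    (hA : A.IsSymm)
    (h01 : ∀ i j, A i j = 0 ∨ A i j = 1)
    (hQ : Q * Qᵀ = 1) (hQ' : Qᵀ * Q = 1)
    (hV : V.PosDef) (hV2 : V * V = 1 + A * A) :
    ∀ j, ∑ p, ((V * Q) j p) ^ 2
      = 1 + ((Finset.univ.filter fun i => A i j = 1).card : ℝ) :=
  row_sq_sum_unweighted_general A Q V hA h01 hQ hV hV2
end

section
/- Let A be an n×n real symmetric matrix and let R be an n×n real matrix such that the complex matrix U = (I + iA) * R (with A and R regarded as complex matrices) is unitary. Then R * Rᵀ = (I + A²)⁻¹. -/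
open Matrix Finset

lemma conjTranspose_map_ofReal {n : ℕ} (M : Matrix (Fin n) (Fin n) ℝ) :
    (M.map (Complex.ofReal ·))ᴴ = Mᵀ.map (Complex.ofReal ·) := by
  ext i j
  simp [Matrix.conjTranspose_apply, Matrix.map_apply]

/-- Eq. (13) of the paper: if `A` is real symmetric and `R` is a
real matrix such that `U = (I + i A) R` is unitary, then
`R Rᵀ = (I + A²)⁻¹`. -/
theorem re_part_sq_of_unitary {n : ℕ}
    (A R : Matrix (Fin n) (Fin n) ℝ)
    (hA : A.IsSymm)
    (hU : ((1 + Complex.I • A.map (Complex.ofReal ·)) * R.map (Complex.ofReal ·))ᴴ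
        * ((1 + Complex.I • A.map (Complex.ofReal ·)) * R.map (Complex.ofReal ·)) = 1) :
    R * Rᵀ = (1 + A * A)⁻¹ := by
  set c : ℝ →+* ℂ := Complex.ofRealHom
  set A' := A.map (Complex.ofReal ·) with hA'
  set R' := R.map (Complex.ofReal ·) with hR'
  have hAH : A'ᴴ = A' := by
    rw [hA', conjTranspose_map_ofReal, hA.eq]
  have hRH : R'ᴴ = Rᵀ.map (Complex.ofReal ·) := conjTranspose_map_ofReal R
  have hBH : (1 + Complex.I • A')ᴴ = 1 - Complex.I • A' := by
    rw [conjTranspose_add, conjTranspose_smul, hAH, conjTranspose_one]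
    simp [sub_eq_add_neg]
  have hII : (Complex.I • A') * (Complex.I • A') = -(A' * A') := by
    rw [Matrix.smul_mul, Matrix.mul_smul, smul_smul, Complex.I_mul_I, neg_smul, one_smul]
  have hBB : (1 - Complex.I • A') * (1 + Complex.I • A') = 1 + A' * A' := by
    rw [sub_mul, mul_add, mul_add, one_mul, one_mul, mul_one, hII]
    abel
  have key' : (Rᵀ.map (Complex.ofReal ·)) * (1 + A' * A') * R' = 1 := by
    rw [← hBB, ← hRH]
    calc R'ᴴ * ((1 - Complex.I • A') * (1 + Complex.I • A')) * R'
        = (R'ᴴ * (1 - Complex.I • A')) * ((1 + Complex.I • A') * R') := by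
          rw [Matrix.mul_assoc, Matrix.mul_assoc, Matrix.mul_assoc]
      _ = ((1 + Complex.I • A') * R')ᴴ * ((1 + Complex.I • A') * R') := by
          rw [conjTranspose_mul, hBH]
      _ = 1 := hU
  have key : Rᵀ * (1 + A * A) * R = 1 := by
    have hmap : c.mapMatrix (Rᵀ * (1 + A * A) * R) = c.mapMatrix 1 := by
      rw [_root_.map_mul, _root_.map_mul, map_add, _root_.map_one, _root_.map_mul]
      exact key'
    ext i j
    have h2 := congrArg (fun M : Matrix (Fin n) (Fin n) ℂ => M i j) hmap
    simp only [RingHom.mapMatrix_apply, Matrix.map_apply] at h2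
    exact Complex.ofReal_injective h2
  have h2 : R * (Rᵀ * (1 + A * A)) = 1 := mul_eq_one_comm.mp key
  rw [← Matrix.mul_assoc] at h2
  exact (Matrix.inv_eq_left_inv h2).symm
end
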